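/- Let {Uⁿ}_{n=0}^N be a CNFD solution. Then the discrete energy is bounded: E_h(Uⁿ) ≤ E_h(U⁰) + (λ²/(4ν)) · ‖U⁰‖²_{2,h} for every n = 0, 1, …, N. -/

import Mathlib

/-!
Test the scheme against `conj (Uⁿ⁺¹ - Uⁿ)`, `conj m` and `|m|² conj m`, where `m = U^{n+1/2}`,
and sum by parts. With `h = Δx Δy` this gives, for each step,

* `E_h(Uⁿ⁺¹) - E_h(Uⁿ) = 2 ε h ∑ |m|² Im ((Uⁿ⁺¹ - Uⁿ) conj m)`,
* `‖Uⁿ⁺¹‖²_{2,h} - ‖Uⁿ‖²_{2,h} = -2 τ ε h ∑ |m|⁴`,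
* `∑ |m|² Im ((Uⁿ⁺¹ - Uⁿ) conj m) ≤ τ λ²/(4ν) ∑ |m|⁴`.

The last one holds because `z ↦ |z|² z` is monotone, so the Laplacian contributes with a sign, and
because `λ (s + t)/2 - ν (s² + s t + t²)/3 ≤ λ²/(4ν)`. Hence `E_h + λ²/(4ν) ‖·‖²_{2,h}` does not
increase along the scheme; dropping its nonnegative mass part at time `n` gives the bound.
-/

noncomputable section

open Finset Complex ComplexConjugate

/-- Membership in the space `X_JK`: complex arrays vanishing on the boundary of the grid. -/
def memX (J K : ℕ) (u : ℕ → ℕ → ℂ) : Prop :=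
  (∀ k, u 0 k = 0) ∧ (∀ k, u J k = 0) ∧ (∀ j, u j 0 = 0) ∧ (∀ j, u j K = 0)

/-- `normP Δx Δy J K p u = ‖u‖_{p,h}^p`. -/
def normP (Δx Δy : ℝ) (J K : ℕ) (p : ℕ) (u : ℕ → ℕ → ℂ) : ℝ :=
  Δx * Δy * ∑ j ∈ range J, ∑ k ∈ range K, ‖u j k‖ ^ p

/-- `gradSq Δx Δy J K u = ‖δ⁺u‖²_{2,h}`. -/
def gradSq (Δx Δy : ℝ) (J K : ℕ) (u : ℕ → ℕ → ℂ) : ℝ :=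
  Δx * Δy * ∑ j ∈ range J, ∑ k ∈ range K,
    (‖(u (j + 1) k - u j k) / (Δx : ℂ)‖ ^ 2 +
      ‖(u j (k + 1) - u j k) / (Δy : ℂ)‖ ^ 2)

/-- The discrete energy `E_h(u)`. -/
def energy (Δx Δy : ℝ) (J K : ℕ) (lam ν : ℝ) (u : ℕ → ℕ → ℂ) : ℝ :=
  gradSq Δx Δy J K u - lam / 2 * normP Δx Δy J K 4 u + ν / 3 * normP Δx Δy J K 6 u

/-- The discrete Laplacian `δ² = δ²_x + δ²_y` (at interior indices). -/
def delta2 (Δx Δy : ℝ) (u : ℕ → ℕ → ℂ) (j k : ℕ) : ℂ :=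
  (u (j + 1) k - 2 * u j k + u (j - 1) k) / (Δx : ℂ) ^ 2 +
    (u j (k + 1) - 2 * u j k + u j (k - 1)) / (Δy : ℂ) ^ 2

/-- `ψ₁(z,w) = ((|z|² + |w|²)/2)·((z+w)/2)`. -/
def psi1 (z w : ℂ) : ℂ :=
  (((‖z‖ ^ 2 + ‖w‖ ^ 2) / 2 : ℝ) : ℂ) * ((z + w) / 2)

/-- `ψ₂(z,w) = ((|z|⁴ + |z|²|w|² + |w|⁴)/3)·((z+w)/2)`. -/
def psi2 (z w : ℂ) : ℂ :=
  (((‖z‖ ^ 4 + ‖z‖ ^ 2 * ‖w‖ ^ 2 + ‖w‖ ^ 4) / 3 : ℝ) : ℂ) *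
    ((z + w) / 2)

/-- `φ(z,w) = |(z+w)/2|²·((z+w)/2)`. -/
def phi (z w : ℂ) : ℂ :=
  ((‖(z + w) / 2‖ ^ 2 : ℝ) : ℂ) * ((z + w) / 2)

/-- One Crank–Nicolson step equation: `W` is the next level, `V` the current one. -/
def stepEq (Δx Δy : ℝ) (J K : ℕ) (lam ν ε τ : ℝ) (W V : ℕ → ℕ → ℂ) : Prop :=
  ∀ j k : ℕ, 1 ≤ j → j ≤ J - 1 → 1 ≤ k → k ≤ K - 1 →
    Complex.I * (W j k - V j k) / (τ : ℂ) +
      delta2 Δx Δy (fun j' k' => (W j' k' + V j' k') / 2) j k +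
      (lam : ℂ) * psi1 (W j k) (V j k) - (ν : ℂ) * psi2 (W j k) (V j k) +
      Complex.I * (ε : ℂ) * phi (W j k) (V j k) = 0

/-- A CNFD solution `U⁰, …, U^N`. -/
def isCNFD (Δx Δy : ℝ) (J K : ℕ) (lam ν ε τ : ℝ) (N : ℕ) (U : ℕ → ℕ → ℕ → ℂ) : Prop :=
  (∀ n, n ≤ N → memX J K (U n)) ∧
    ∀ n, n < N → stepEq Δx Δy J K lam ν ε τ (U (n + 1)) (U n)

-- At `j = 0` the summand is `(f 1 - f 0) * g 0`, as `0 - 1 = 0` in `ℕ`: no boundary term at `0`.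
theorem sum_range_secondDiff_mul {R : Type*} [CommRing R] (f g : ℕ → R) (n : ℕ) :
    ∑ j ∈ range n, (f (j + 1) - 2 * f j + f (j - 1)) * g j =
      -∑ j ∈ range n, (f (j + 1) - f j) * (g (j + 1) - g j) + (f n - f (n - 1)) * g n := by
  induction n with
  | zero => simp
  | succ n ih => rw [sum_range_succ, sum_range_succ, ih, Nat.add_sub_cancel]; ring

def fwdDiffX (Δx : ℝ) (u : ℕ → ℕ → ℂ) (j k : ℕ) : ℂ := (u (j + 1) k - u j k) / Δx

def fwdDiffY (Δy : ℝ) (u : ℕ → ℕ → ℂ) (j k : ℕ) : ℂ := (u j (k + 1) - u j k) / Δy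

theorem gradSq_eq (Δx Δy : ℝ) (J K : ℕ) (u : ℕ → ℕ → ℂ) :
    gradSq Δx Δy J K u = Δx * Δy * ∑ j ∈ range J, ∑ k ∈ range K,
      (‖fwdDiffX Δx u j k‖ ^ 2 + ‖fwdDiffY Δy u j k‖ ^ 2) := rfl

theorem sum_secondDiff_div_sq_mul_conj (Δ : ℝ) (f g : ℕ → ℂ) (n : ℕ) (hgn : g n = 0) :
    ∑ j ∈ range n, (f (j + 1) - 2 * f j + f (j - 1)) / (Δ : ℂ) ^ 2 * conj (g j) =
      -∑ j ∈ range n, (f (j + 1) - f j) / Δ * conj ((g (j + 1) - g j) / Δ) := by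
  have h := sum_range_secondDiff_mul f (fun j => conj (g j) / (Δ : ℂ) ^ 2) n
  rw [hgn, map_zero, zero_div, mul_zero, add_zero] at h
  convert h using 1
  · exact sum_congr rfl fun j _ => by ring
  · congr 1
    exact sum_congr rfl fun j _ => by simp only [map_div₀, map_sub, Complex.conj_ofReal]; ring

theorem sum_delta2_mul_conj (Δx Δy : ℝ) (J K : ℕ) (u g : ℕ → ℕ → ℂ)
    (hgJ : ∀ k, g J k = 0) (hgK : ∀ j, g j K = 0) :
    ∑ j ∈ range J, ∑ k ∈ range K, delta2 Δx Δy u j k * conj (g j k) =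
      -∑ j ∈ range J, ∑ k ∈ range K,
        (fwdDiffX Δx u j k * conj (fwdDiffX Δx g j k) +
          fwdDiffY Δy u j k * conj (fwdDiffY Δy g j k)) := by
  simp only [delta2, add_mul, sum_add_distrib, neg_add, fwdDiffX, fwdDiffY,
    sum_secondDiff_div_sq_mul_conj Δy (u _) (g _) K (hgK _), sum_neg_distrib]
  rw [sum_comm, sum_congr rfl fun k _ =>
    sum_secondDiff_div_sq_mul_conj Δx (u · k) (g · k) J (hgJ k), sum_neg_distrib, sum_comm]

theorem re_sub_mul_conj_midpoint (z w : ℂ) :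
    ((z - w) * conj ((z + w) / 2)).re = (‖z‖ ^ 2 - ‖w‖ ^ 2) / 2 := by
  simp only [Complex.sq_norm, Complex.normSq_apply, Complex.mul_re, Complex.sub_re,
    Complex.sub_im, Complex.add_re, Complex.add_im, Complex.conj_re, Complex.conj_im,
    Complex.div_ofNat_re, Complex.div_ofNat_im]
  ring

theorem re_midpoint_mul_conj_sub (z w : ℂ) :
    ((z + w) / 2 * conj (z - w)).re = (‖z‖ ^ 2 - ‖w‖ ^ 2) / 2 := by
  rw [← re_sub_mul_conj_midpoint, ← Complex.conj_re, map_mul, Complex.conj_conj, mul_comm]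

theorem im_conj_mul_comm (a b : ℂ) : (a * conj b).im = -(b * conj a).im := by
  rw [← Complex.conj_im, map_mul, Complex.conj_conj, mul_comm]

theorem re_div_mul_conj_div (p q : ℂ) (Δ : ℝ) :
    (p / Δ * conj (q / Δ)).re = (p * conj q).re / Δ ^ 2 := by
  rw [map_div₀, Complex.conj_ofReal, div_mul_div_comm, ← Complex.ofReal_mul, Complex.div_ofReal_re,
    sq]

theorem re_sub_mul_conj_cube_sub_nonneg (a b : ℂ) :
    0 ≤ ((b - a) * conj ((‖b‖ ^ 2 : ℝ) * b - (‖a‖ ^ 2 : ℝ) * a)).re := by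
  have hre : ((b - a) * conj ((‖b‖ ^ 2 : ℝ) * b - (‖a‖ ^ 2 : ℝ) * a)).re =
      (‖b‖ ^ 2) ^ 2 + (‖a‖ ^ 2) ^ 2 - (a * conj b).re * (‖a‖ ^ 2 + ‖b‖ ^ 2) := by
    simp only [Complex.sq_norm, Complex.normSq_apply, Complex.mul_re, Complex.mul_im,
      Complex.sub_re, Complex.sub_im, Complex.conj_re, Complex.conj_im, Complex.ofReal_re,
      Complex.ofReal_im]
    ring
  have hab : (a * conj b).re ≤ ‖a‖ * ‖b‖ := by
    simpa using Complex.re_le_norm (a * conj b)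
  -- `‖b‖⁴ + ‖a‖⁴ - ‖a‖‖b‖(‖a‖² + ‖b‖²) = (‖a‖ - ‖b‖)² (‖a‖² + ‖a‖‖b‖ + ‖b‖²)`
  rw [hre]
  nlinarith [mul_le_mul_of_nonneg_right hab (by positivity : 0 ≤ ‖a‖ ^ 2 + ‖b‖ ^ 2),
    mul_nonneg (sq_nonneg (‖a‖ - ‖b‖)) (by positivity : 0 ≤ ‖a‖ ^ 2 + ‖a‖ * ‖b‖ + ‖b‖ ^ 2)]

theorem sum_sq_norm_mul_re_delta2_mul_conj_nonpos (Δx Δy : ℝ) (J K : ℕ) {u : ℕ → ℕ → ℂ}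
    (huJ : ∀ k, u J k = 0) (huK : ∀ j, u j K = 0) :
    ∑ j ∈ range J, ∑ k ∈ range K, ‖u j k‖ ^ 2 * (delta2 Δx Δy u j k * conj (u j k)).re ≤ 0 := by
  set g : ℕ → ℕ → ℂ := fun j k => (‖u j k‖ ^ 2 : ℝ) * u j k
  have hweight : ∀ j k, ‖u j k‖ ^ 2 * (delta2 Δx Δy u j k * conj (u j k)).re =
      (delta2 Δx Δy u j k * conj (g j k)).re := fun j k => by
    rw [map_mul, Complex.conj_ofReal, mul_left_comm, Complex.re_ofReal_mul]
  have hgreen := sum_delta2_mul_conj Δx Δy J K u g (fun k => by simp [g, huJ])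
    (fun j => by simp [g, huK])
  simp only [hweight, ← Complex.re_sum]
  rw [hgreen]
  simp only [Complex.neg_re, Complex.re_sum, Complex.add_re, neg_nonpos]
  refine sum_nonneg fun j _ => sum_nonneg fun k _ => add_nonneg ?_ ?_ <;>
  · simp only [fwdDiffX, fwdDiffY, re_div_mul_conj_div]
    exact div_nonneg (re_sub_mul_conj_cube_sub_nonneg _ _) (sq_nonneg _)

def nlCoeff (lam ν : ℝ) (z w : ℂ) : ℝ :=
  lam * ((‖z‖ ^ 2 + ‖w‖ ^ 2) / 2) - ν * ((‖z‖ ^ 4 + ‖z‖ ^ 2 * ‖w‖ ^ 2 + ‖w‖ ^ 4) / 3)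

theorem nonlinearity_eq (lam ν ε : ℝ) (z w : ℂ) :
    lam * psi1 z w - ν * psi2 z w + I * ε * phi z w =
      (nlCoeff lam ν z w + I * (ε * ‖(z + w) / 2‖ ^ 2 : ℝ)) * ((z + w) / 2) := by
  simp only [psi1, psi2, phi, nlCoeff]; push_cast; ring

theorem nlCoeff_le (lam : ℝ) {ν : ℝ} (hν : 0 < ν) (z w : ℂ) :
    nlCoeff lam ν z w ≤ lam ^ 2 / (4 * ν) := by
  set s := ‖z‖ ^ 2
  set t := ‖w‖ ^ 2
  have hmean : ((s + t) / 2) ^ 2 ≤ (s ^ 2 + s * t + t ^ 2) / 3 := by nlinarith [sq_nonneg (s - t)]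
  have : nlCoeff lam ν z w = lam * ((s + t) / 2) - ν * ((s ^ 2 + s * t + t ^ 2) / 3) := by
    simp only [nlCoeff, s, t]; ring
  rw [this, le_div_iff₀ (by positivity)]
  nlinarith [mul_le_mul_of_nonneg_left hmean hν.le, sq_nonneg (lam - 2 * ν * ((s + t) / 2))]

theorem re_I_mul_div_add_add (a b c : ℂ) (τ p q : ℝ) :
    (I * a / τ + b + (p + I * q) * c).re = -a.im / τ + b.re + (p * c.re - q * c.im) := by
  simp [Complex.div_ofReal_re]

theorem im_I_mul_div_add_add (a b c : ℂ) (τ p q : ℝ) :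
    (I * a / τ + b + (p + I * q) * c).im = a.re / τ + b.im + (p * c.im + q * c.re) := by
  simp [Complex.div_ofReal_im]

section Pointwise

variable (lam ν ε τ : ℝ) (z w D : ℂ)

theorem residual_mul_conj (t : ℂ) :
    (I * (z - w) / τ + D + lam * psi1 z w - ν * psi2 z w + I * ε * phi z w) * conj t =
      I * ((z - w) * conj t) / τ + D * conj t +
        (nlCoeff lam ν z w + I * (ε * ‖(z + w) / 2‖ ^ 2 : ℝ)) * ((z + w) / 2 * conj t) := by
  rw [add_sub_assoc, add_assoc, add_assoc, nonlinearity_eq]; ring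

theorem im_residual_mul_conj_midpoint :
    ((I * (z - w) / τ + D + lam * psi1 z w - ν * psi2 z w + I * ε * phi z w) *
      conj ((z + w) / 2)).im =
      (‖z‖ ^ 2 - ‖w‖ ^ 2) / 2 / τ + (D * conj ((z + w) / 2)).im + ε * ‖(z + w) / 2‖ ^ 4 := by
  rw [residual_mul_conj, im_I_mul_div_add_add, re_sub_mul_conj_midpoint, Complex.mul_conj']
  norm_cast; ring

theorem re_residual_mul_conj_midpoint :
    ((I * (z - w) / τ + D + lam * psi1 z w - ν * psi2 z w + I * ε * phi z w) *
      conj ((z + w) / 2)).re =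
      -((z - w) * conj ((z + w) / 2)).im / τ + (D * conj ((z + w) / 2)).re +
        nlCoeff lam ν z w * ‖(z + w) / 2‖ ^ 2 := by
  rw [residual_mul_conj, re_I_mul_div_add_add, Complex.mul_conj']
  norm_cast; ring

theorem re_residual_mul_conj_sub :
    ((I * (z - w) / τ + D + lam * psi1 z w - ν * psi2 z w + I * ε * phi z w) * conj (z - w)).re =
      (D * conj (z - w)).re + lam * (‖z‖ ^ 4 - ‖w‖ ^ 4) / 4 - ν * (‖z‖ ^ 6 - ‖w‖ ^ 6) / 6 +
        ε * ‖(z + w) / 2‖ ^ 2 * ((z - w) * conj ((z + w) / 2)).im := by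
  rw [residual_mul_conj, re_I_mul_div_add_add, re_midpoint_mul_conj_sub, Complex.mul_conj',
    im_conj_mul_comm]
  norm_cast; simp only [nlCoeff]; ring

end Pointwise

def midLevel (W V : ℕ → ℕ → ℂ) (j k : ℕ) : ℂ := (W j k + V j k) / 2

def cnfdResidual (Δx Δy lam ν ε τ : ℝ) (W V : ℕ → ℕ → ℂ) (j k : ℕ) : ℂ :=
  I * (W j k - V j k) / τ + delta2 Δx Δy (midLevel W V) j k + lam * psi1 (W j k) (V j k) -
    ν * psi2 (W j k) (V j k) + I * ε * phi (W j k) (V j k)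

theorem memX_midLevel {J K : ℕ} {w v : ℕ → ℕ → ℂ} (hw : memX J K w) (hv : memX J K v) :
    memX J K (midLevel w v) := by
  refine ⟨fun k => ?_, fun k => ?_, fun j => ?_, fun j => ?_⟩ <;>
    simp [midLevel, hw.1, hw.2.1, hw.2.2.1, hw.2.2.2, hv.1, hv.2.1, hv.2.2.1, hv.2.2.2]

theorem memX_sub {J K : ℕ} {w v : ℕ → ℕ → ℂ} (hw : memX J K w) (hv : memX J K v) :
    memX J K (fun j k => w j k - v j k) := by
  refine ⟨fun k => ?_, fun k => ?_, fun j => ?_, fun j => ?_⟩ <;>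
    simp [hw.1, hw.2.1, hw.2.2.1, hw.2.2.2, hv.1, hv.2.1, hv.2.2.1, hv.2.2.2]

theorem fwdDiffX_midLevel (Δx : ℝ) (w v : ℕ → ℕ → ℂ) (j k : ℕ) :
    fwdDiffX Δx (midLevel w v) j k = (fwdDiffX Δx w j k + fwdDiffX Δx v j k) / 2 := by
  simp only [fwdDiffX, midLevel]; ring

theorem fwdDiffY_midLevel (Δy : ℝ) (w v : ℕ → ℕ → ℂ) (j k : ℕ) :
    fwdDiffY Δy (midLevel w v) j k = (fwdDiffY Δy w j k + fwdDiffY Δy v j k) / 2 := by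
  simp only [fwdDiffY, midLevel]; ring

theorem fwdDiffX_sub (Δx : ℝ) (w v : ℕ → ℕ → ℂ) (j k : ℕ) :
    fwdDiffX Δx (fun j k => w j k - v j k) j k = fwdDiffX Δx w j k - fwdDiffX Δx v j k := by
  simp only [fwdDiffX]; ring

theorem fwdDiffY_sub (Δy : ℝ) (w v : ℕ → ℕ → ℂ) (j k : ℕ) :
    fwdDiffY Δy (fun j k => w j k - v j k) j k = fwdDiffY Δy w j k - fwdDiffY Δy v j k := by
  simp only [fwdDiffY]; ring

section Step

variable {Δx Δy lam ν ε τ : ℝ} {J K : ℕ} {w v : ℕ → ℕ → ℂ}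

theorem cnfdResidual_mul_conj_eq_zero (heq : stepEq Δx Δy J K lam ν ε τ w v)
    {t : ℕ → ℕ → ℂ} (ht : memX J K t) {j k : ℕ} (hj : j ∈ range J) (hk : k ∈ range K) :
    cnfdResidual Δx Δy lam ν ε τ w v j k * conj (t j k) = 0 := by
  rcases Nat.eq_zero_or_pos j with rfl | hj0
  · simp [ht.1]
  rcases Nat.eq_zero_or_pos k with rfl | hk0
  · simp [ht.2.2.1]
  rw [mem_range] at hj hk
  rw [show cnfdResidual Δx Δy lam ν ε τ w v j k = 0 from heq j k hj0 (by omega) hk0 (by omega),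
    zero_mul]

theorem sum_sq_norm_sub_eq (hτ : τ ≠ 0) (heq : stepEq Δx Δy J K lam ν ε τ w v)
    (hw : memX J K w) (hv : memX J K v) :
    ∑ j ∈ range J, ∑ k ∈ range K, ‖w j k‖ ^ 2 - ∑ j ∈ range J, ∑ k ∈ range K, ‖v j k‖ ^ 2 =
      -(2 * τ * ε) * ∑ j ∈ range J, ∑ k ∈ range K, ‖midLevel w v j k‖ ^ 4 := by
  set m := midLevel w v
  have hm := memX_midLevel hw hv
  have hpt : ∀ j ∈ range J, ∀ k ∈ range K, (‖w j k‖ ^ 2 - ‖v j k‖ ^ 2) / 2 / τ +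
      (delta2 Δx Δy m j k * conj (m j k)).im + ε * ‖m j k‖ ^ 4 = 0 := fun j hj k hk =>
    (im_residual_mul_conj_midpoint lam ν ε τ (w j k) (v j k) (delta2 Δx Δy m j k)).symm.trans
      (congrArg Complex.im (cnfdResidual_mul_conj_eq_zero heq hm hj hk))
  have hgreen : ∑ j ∈ range J, ∑ k ∈ range K, (delta2 Δx Δy m j k * conj (m j k)).im = 0 := by
    simp only [← Complex.im_sum]
    rw [sum_delta2_mul_conj Δx Δy J K m m hm.2.1 hm.2.2.2]
    simp only [Complex.mul_conj', Complex.neg_im, Complex.im_sum, Complex.add_im]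
    norm_cast; simp
  have hsum := sum_congr rfl fun j hj => sum_congr rfl fun k hk => hpt j hj k hk
  simp only [sum_add_distrib, ← sum_div, sum_sub_distrib, ← mul_sum, hgreen, sum_const_zero] at hsum
  field_simp at hsum
  linear_combination hsum

theorem sum_re_delta2_midLevel_mul_conj_sub (hw : memX J K w) (hv : memX J K v) :
    ∑ j ∈ range J, ∑ k ∈ range K,
        (delta2 Δx Δy (midLevel w v) j k * conj (w j k - v j k)).re =
      -(∑ j ∈ range J, ∑ k ∈ range K, (‖fwdDiffX Δx w j k‖ ^ 2 + ‖fwdDiffY Δy w j k‖ ^ 2) -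
        ∑ j ∈ range J, ∑ k ∈ range K, (‖fwdDiffX Δx v j k‖ ^ 2 + ‖fwdDiffY Δy v j k‖ ^ 2)) / 2 := by
  simp only [← Complex.re_sum]
  rw [sum_delta2_mul_conj Δx Δy J K _ _ (memX_sub hw hv).2.1 (memX_sub hw hv).2.2.2]
  simp only [Complex.neg_re, Complex.re_sum, Complex.add_re, fwdDiffX_midLevel, fwdDiffY_midLevel,
    fwdDiffX_sub, fwdDiffY_sub, re_midpoint_mul_conj_sub, ← sum_sub_distrib, neg_div, sum_div]
  congr 1
  exact sum_congr rfl fun j _ => sum_congr rfl fun k _ => by ring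

theorem energy_sub_eq (heq : stepEq Δx Δy J K lam ν ε τ w v) (hw : memX J K w) (hv : memX J K v) :
    energy Δx Δy J K lam ν w - energy Δx Δy J K lam ν v =
      2 * ε * (Δx * Δy) * ∑ j ∈ range J, ∑ k ∈ range K,
        ‖midLevel w v j k‖ ^ 2 * ((w j k - v j k) * conj (midLevel w v j k)).im := by
  set m := midLevel w v
  have hpt : ∀ j ∈ range J, ∀ k ∈ range K, (delta2 Δx Δy m j k * conj (w j k - v j k)).re +
      lam * (‖w j k‖ ^ 4 - ‖v j k‖ ^ 4) / 4 - ν * (‖w j k‖ ^ 6 - ‖v j k‖ ^ 6) / 6 +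
      ε * ‖m j k‖ ^ 2 * ((w j k - v j k) * conj (m j k)).im = 0 := fun j hj k hk =>
    (re_residual_mul_conj_sub lam ν ε τ (w j k) (v j k) (delta2 Δx Δy m j k)).symm.trans
      (congrArg Complex.re (cnfdResidual_mul_conj_eq_zero heq (memX_sub hw hv) hj hk))
  have hsum := sum_congr rfl fun j hj => sum_congr rfl fun k hk => hpt j hj k hk
  simp only [sum_add_distrib, sum_sub_distrib, ← sum_div, ← mul_sum, mul_assoc,
    sum_const_zero] at hsum
  simp only [energy, gradSq_eq, normP]
  linear_combination (-2 * (Δx * Δy)) * hsum +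
    (2 * (Δx * Δy)) * sum_re_delta2_midLevel_mul_conj_sub (Δx := Δx) (Δy := Δy) hw hv

theorem sum_sq_norm_mul_im_le (hν : 0 < ν) (hτ : 0 < τ) (heq : stepEq Δx Δy J K lam ν ε τ w v)
    (hw : memX J K w) (hv : memX J K v) :
    ∑ j ∈ range J, ∑ k ∈ range K,
        ‖midLevel w v j k‖ ^ 2 * ((w j k - v j k) * conj (midLevel w v j k)).im ≤
      τ * (lam ^ 2 / (4 * ν)) * ∑ j ∈ range J, ∑ k ∈ range K, ‖midLevel w v j k‖ ^ 4 := by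
  set m := midLevel w v
  have hm := memX_midLevel hw hv
  have hpt : ∀ j ∈ range J, ∀ k ∈ range K,
      ‖m j k‖ ^ 2 * ((w j k - v j k) * conj (m j k)).im ≤
        τ * (‖m j k‖ ^ 2 * (delta2 Δx Δy m j k * conj (m j k)).re +
          lam ^ 2 / (4 * ν) * ‖m j k‖ ^ 4) := by
    intro j hj k hk
    have h : -((w j k - v j k) * conj (m j k)).im / τ + (delta2 Δx Δy m j k * conj (m j k)).re +
        nlCoeff lam ν (w j k) (v j k) * ‖m j k‖ ^ 2 = 0 :=
      (re_residual_mul_conj_midpoint lam ν ε τ (w j k) (v j k) (delta2 Δx Δy m j k)).symm.trans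
        (congrArg Complex.re (cnfdResidual_mul_conj_eq_zero heq hm hj hk))
    have him : ((w j k - v j k) * conj (m j k)).im = τ * ((delta2 Δx Δy m j k * conj (m j k)).re +
        nlCoeff lam ν (w j k) (v j k) * ‖m j k‖ ^ 2) := by
      have hdiv : ((w j k - v j k) * conj (m j k)).im / τ = (delta2 Δx Δy m j k * conj (m j k)).re +
          nlCoeff lam ν (w j k) (v j k) * ‖m j k‖ ^ 2 := by linear_combination -h
      rw [← hdiv]; field_simp
    calc _ = τ * (‖m j k‖ ^ 2 * (delta2 Δx Δy m j k * conj (m j k)).re +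
          nlCoeff lam ν (w j k) (v j k) * ‖m j k‖ ^ 4) := by rw [him]; ring
      _ ≤ _ := by gcongr; exact nlCoeff_le lam hν (w j k) (v j k)
  calc _ ≤ ∑ j ∈ range J, ∑ k ∈ range K, τ * (‖m j k‖ ^ 2 * (delta2 Δx Δy m j k * conj (m j k)).re +
          lam ^ 2 / (4 * ν) * ‖m j k‖ ^ 4) :=
        sum_le_sum fun j hj => sum_le_sum fun k hk => hpt j hj k hk
    _ = τ * (∑ j ∈ range J, ∑ k ∈ range K, ‖m j k‖ ^ 2 * (delta2 Δx Δy m j k * conj (m j k)).re) +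
          τ * (lam ^ 2 / (4 * ν)) * ∑ j ∈ range J, ∑ k ∈ range K, ‖m j k‖ ^ 4 := by
        simp only [mul_add, sum_add_distrib, mul_sum, mul_assoc]
    _ ≤ _ := add_le_of_nonpos_left (mul_nonpos_of_nonneg_of_nonpos hτ.le
        (sum_sq_norm_mul_re_delta2_mul_conj_nonpos Δx Δy J K hm.2.1 hm.2.2.2))

theorem energy_add_mass_le (hν : 0 < ν) (hε : 0 ≤ ε) (hτ : 0 < τ) (hΔ : 0 ≤ Δx * Δy)
    (heq : stepEq Δx Δy J K lam ν ε τ w v) (hw : memX J K w) (hv : memX J K v) :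
    energy Δx Δy J K lam ν w + lam ^ 2 / (4 * ν) * normP Δx Δy J K 2 w ≤
      energy Δx Δy J K lam ν v + lam ^ 2 / (4 * ν) * normP Δx Δy J K 2 v := by
  have hE := energy_sub_eq heq hw hv
  have hM := sum_sq_norm_sub_eq hτ.ne' heq hw hv
  have hW := mul_le_mul_of_nonneg_left (sum_sq_norm_mul_im_le hν hτ heq hw hv)
    (by positivity : 0 ≤ 2 * ε * (Δx * Δy))
  simp only [normP]
  linear_combination hE + hW + (lam ^ 2 / (4 * ν) * (Δx * Δy)) * hM

end Step

theorem stmt10_general (J K : ℕ) (a b c d : ℝ) (hab : a < b) (hcd : c < d)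
    (Δx Δy : ℝ) (hΔx : Δx = (b - a) / J) (hΔy : Δy = (d - c) / K)
    (lam ν ε τ : ℝ) (hν : 0 < ν) (hε : 0 ≤ ε) (hτ : 0 < τ)
    (N : ℕ) (U : ℕ → ℕ → ℕ → ℂ) (hU : isCNFD Δx Δy J K lam ν ε τ N U)
    (n : ℕ) (hn : n ≤ N) :
    energy Δx Δy J K lam ν (U n) ≤
      energy Δx Δy J K lam ν (U 0) + lam ^ 2 / (4 * ν) * normP Δx Δy J K 2 (U 0) := by
  obtain ⟨hmem, hstep⟩ := hU
  have hΔ : 0 ≤ Δx * Δy := by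
    rw [hΔx, hΔy]
    exact mul_nonneg (div_nonneg (by linarith) J.cast_nonneg) (div_nonneg (by linarith) K.cast_nonneg)
  have hmono : ∀ i ≤ N, energy Δx Δy J K lam ν (U i) + lam ^ 2 / (4 * ν) * normP Δx Δy J K 2 (U i) ≤
      energy Δx Δy J K lam ν (U 0) + lam ^ 2 / (4 * ν) * normP Δx Δy J K 2 (U 0) := by
    intro i hi
    induction i with
    | zero => exact le_rfl
    | succ i ih =>
      exact (energy_add_mass_le hν hε hτ hΔ (hstep i hi) (hmem _ hi) (hmem i (by omega))).trans
        (ih (by omega))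
  have hmass : 0 ≤ lam ^ 2 / (4 * ν) * normP Δx Δy J K 2 (U n) :=
    mul_nonneg (by positivity) (mul_nonneg hΔ (by positivity))
  linarith [hmono n hn]

/-- boundedness of the discrete energy. -/
theorem stmt10 (J K : ℕ) (hJ : 2 ≤ J) (hK : 2 ≤ K) (a b c d : ℝ) (hab : a < b) (hcd : c < d)
    (Δx Δy : ℝ) (hΔx : Δx = (b - a) / J) (hΔy : Δy = (d - c) / K)
    (lam ν ε τ : ℝ) (hν : 0 < ν) (hε : 0 ≤ ε) (hτ : 0 < τ)
    (N : ℕ) (U : ℕ → ℕ → ℕ → ℂ) (hU : isCNFD Δx Δy J K lam ν ε τ N U)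
    (n : ℕ) (hn : n ≤ N) :
    energy Δx Δy J K lam ν (U n) ≤
      energy Δx Δy J K lam ν (U 0) + lam ^ 2 / (4 * ν) * normP Δx Δy J K 2 (U 0) :=
  stmt10_general J K a b c d hab hcd Δx Δy hΔx hΔy lam ν ε τ hν hε hτ N U hU n hn
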